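/- If the equation x'(t) = L(t)x_t is shadowable, then for all t ≥ s ≥ 0 the phase space decomposes as the algebraic sum C = T(t,s)C + 𝒮(t), where 𝒮(t) is the stable subspace at time t. -/

import Mathlib

open Set

noncomputable section

/-- The Euclidean state space ℝ^d. -/
abbrev Rd (d : ℕ) : Type := EuclideanSpace ℝ (Fin d)

/-- The phase space C = C([-r,0], ℝ^d) with the supremum norm. -/
abbrev Ph (d : ℕ) (r : ℝ) : Type := C(Set.Icc (-r) (0:ℝ), Rd d)

/-- The segment x_t ∈ C of a continuous function x : ℝ → ℝ^d, x_t(θ) = x(t+θ). -/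
def seg (d : ℕ) (r : ℝ) (x : ℝ → Rd d) (hx : Continuous x) (t : ℝ) : Ph d r :=
  ⟨fun θ => x (t + θ.1), hx.comp (continuous_const.add continuous_subtype_val)⟩

/-- `x` is a solution of x'(t) = L(t)x_t on [s, ∞) (right-hand derivative at s). -/
def IsSol (d : ℕ) (r : ℝ) (L : ℝ → (Ph d r →L[ℝ] Rd d)) (s : ℝ)
    (x : ℝ → Rd d) (hx : Continuous x) : Prop :=
  ∀ t, s ≤ t → HasDerivWithinAt x (L t (seg d r x hx t)) (Set.Ici s) t

/-- `T` is the solution operator family of x'(t) = L(t)x_t :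
for every s ≥ 0 and φ ∈ C there is a solution x on [s,∞) with x_s = φ and x_t = T(t,s)φ. -/
def IsSolOp (d : ℕ) (r : ℝ) (L : ℝ → (Ph d r →L[ℝ] Rd d))
    (T : ℝ → ℝ → (Ph d r →L[ℝ] Ph d r)) : Prop :=
  ∀ s, 0 ≤ s → ∀ φ : Ph d r, ∃ (x : ℝ → Rd d) (hx : Continuous x),
    IsSol d r L s x hx ∧ seg d r x hx s = φ ∧ ∀ t, s ≤ t → seg d r x hx t = T t s φ

/-- The evolution family property of the solution operators. -/
def Cocycle (d : ℕ) (r : ℝ) (T : ℝ → ℝ → (Ph d r →L[ℝ] Ph d r)) : Prop :=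
  (∀ s, 0 ≤ s → T s s = ContinuousLinearMap.id ℝ (Ph d r)) ∧
  ∀ τ t s, 0 ≤ s → s ≤ t → t ≤ τ → T τ s = (T τ t).comp (T t s)

/-- Uniqueness of solutions with a given initial segment at time s. -/
def UniqueSol (d : ℕ) (r : ℝ) (L : ℝ → (Ph d r →L[ℝ] Rd d)) : Prop :=
  ∀ s, 0 ≤ s → ∀ (x y : ℝ → Rd d) (hx : Continuous x) (hy : Continuous y),
    IsSol d r L s x hx → IsSol d r L s y hy → seg d r x hx s = seg d r y hy s →
    ∀ t, s - r ≤ t → x t = y t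

/-- Eq. x'(t) = L(t)x_t is shadowable. -/
def Shadowable (d : ℕ) (r : ℝ) (L : ℝ → (Ph d r →L[ℝ] Rd d)) : Prop :=
  ∀ ε, 0 < ε → ∃ δ, 0 < δ ∧ ∀ (y yd : ℝ → Rd d) (hy : Continuous y),
    ContinuousOn yd (Set.Ici 0) →
    (∀ t, 0 ≤ t → HasDerivWithinAt y (yd t) (Set.Ici 0) t) →
    (∀ t, 0 ≤ t → ‖yd t - L t (seg d r y hy t)‖ ≤ δ) →
    ∃ (x : ℝ → Rd d) (hx : Continuous x), IsSol d r L 0 x hx ∧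
      ∀ t, 0 ≤ t → ‖seg d r x hx t - seg d r y hy t‖ ≤ ε

/-- Eq. x'(t) = L(t)x_t is Hyers–Ulam stable. -/
def HyersUlam (d : ℕ) (r : ℝ) (L : ℝ → (Ph d r →L[ℝ] Rd d)) : Prop :=
  ∃ κ, 0 < κ ∧ ∀ δ, 0 < δ → ∀ (y yd : ℝ → Rd d) (hy : Continuous y),
    ContinuousOn yd (Set.Ici 0) →
    (∀ t, 0 ≤ t → HasDerivWithinAt y (yd t) (Set.Ici 0) t) →
    (∀ t, 0 ≤ t → ‖yd t - L t (seg d r y hy t)‖ ≤ δ) →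
    ∃ (x : ℝ → Rd d) (hx : Continuous x), IsSol d r L 0 x hx ∧
      ∀ t, 0 ≤ t → ‖seg d r x hx t - seg d r y hy t‖ ≤ κ * δ

/-- The stable subspace 𝒮(s) = {φ ∈ C : sup_{t ≥ s} ‖T(t,s)φ‖ < ∞}. -/
def stableSub (d : ℕ) (r : ℝ) (T : ℝ → ℝ → (Ph d r →L[ℝ] Ph d r)) (s : ℝ) :
    Submodule ℝ (Ph d r) where
  carrier := {φ | ∃ M, ∀ t, s ≤ t → ‖T t s φ‖ ≤ M}
  add_mem' := by
    rintro a b ⟨Ma, hMa⟩ ⟨Mb, hMb⟩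
    refine ⟨Ma + Mb, fun t ht => ?_⟩
    calc ‖T t s (a + b)‖ = ‖T t s a + T t s b‖ := by rw [map_add]
    _ ≤ ‖T t s a‖ + ‖T t s b‖ := norm_add_le _ _
    _ ≤ Ma + Mb := add_le_add (hMa t ht) (hMb t ht)
  zero_mem' := ⟨0, fun t ht => by simp⟩
  smul_mem' := by
    rintro c a ⟨Ma, hMa⟩
    refine ⟨‖c‖ * Ma, fun t ht => ?_⟩
    rw [map_smul]
    have h1 : ‖c • (T t s) a‖ = ‖c‖ * ‖(T t s) a‖ := @norm_smul ℝ (Ph d r) _ _ _ _ c _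
    rw [h1]
    exact mul_le_mul_of_nonneg_left (hMa t ht) (norm_nonneg c)

/-- Eq. x'(t) = L(t)x_t admits an exponential dichotomy (with solution operators T). -/
def ExpDich (d : ℕ) (r : ℝ) (T : ℝ → ℝ → (Ph d r →L[ℝ] Ph d r)) : Prop :=
  ∃ (P : ℝ → (Ph d r →L[ℝ] Ph d r)) (D lam : ℝ), 0 < D ∧ 0 < lam ∧
    (∀ t, 0 ≤ t → (P t).comp (P t) = P t) ∧
    (∀ t s, 0 ≤ s → s ≤ t → (P t).comp (T t s) = (T t s).comp (P s)) ∧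
    (∀ t s, 0 ≤ s → s ≤ t →
      Set.BijOn (⇑(T t s)) (LinearMap.ker (P s : Ph d r →ₗ[ℝ] Ph d r) : Set (Ph d r))
        (LinearMap.ker (P t : Ph d r →ₗ[ℝ] Ph d r) : Set (Ph d r))) ∧
    (∀ t s, 0 ≤ s → s ≤ t → ‖(T t s).comp (P s)‖ ≤ D * Real.exp (-lam * (t - s))) ∧
    (∀ t s, 0 ≤ t → t ≤ s → ∀ φ ∈ LinearMap.ker (P t : Ph d r →ₗ[ℝ] Ph d r),
      ‖φ‖ ≤ D * Real.exp (-lam * (s - t)) * ‖T s t φ‖)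

/-!
Let `z` be the solution through `φ` at time `t`. Cutting `z` off smoothly before time `t + 1`
gives a pseudosolution on `[0, ∞)` whose defect has compact support; since the equation is
linear, a rescaling of it is a `δ`-pseudosolution, so shadowing yields a true solution `x` on
`[0, ∞)` staying at bounded distance from the cut-off `z`, hence from `z` itself. By uniqueness
(Gronwall) `x` is the orbit `T(τ, 0) x₀`, so with `φ₁ = T(s, 0) x₀` the orbit of
`φ - T(t, s) φ₁` is `z_τ - x_τ`, which is bounded: `φ - T(t, s) φ₁ ∈ 𝒮(t)`.
-/

section Segments

variable {d : ℕ} {r : ℝ}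

lemma continuous_seg (x : ℝ → Rd d) (hx : Continuous x) : Continuous (seg d r x hx) := by
  have : seg d r x hx = ContinuousMap.curry ⟨fun p : ℝ × Icc (-r) (0 : ℝ) => x (p.1 + p.2.1),
      hx.comp (continuous_fst.add (continuous_subtype_val.comp continuous_snd))⟩ := rfl
  rw [this]
  exact ContinuousMap.continuous _

lemma seg_sub {x y : ℝ → Rd d} (hx : Continuous x) (hy : Continuous y) (t : ℝ) :
    seg d r (fun τ => x τ - y τ) (hx.sub hy) t = seg d r x hx t - seg d r y hy t :=
  rfl

lemma seg_const_smul {x : ℝ → Rd d} (hx : Continuous x) (c t : ℝ) :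
    seg d r (fun τ => c • x τ) (hx.const_smul c) t = c • seg d r x hx t :=
  rfl

lemma seg_eq_of_eqOn {x y : ℝ → Rd d} (hx : Continuous x) (hy : Continuous y) {t : ℝ}
    (h : EqOn x y (Icc (t - r) t)) : seg d r x hx t = seg d r y hy t :=
  ContinuousMap.ext fun θ => h ⟨by linarith [θ.2.1], by linarith [θ.2.2]⟩

lemma eqOn_of_seg_eq {x y : ℝ → Rd d} {hx : Continuous x} {hy : Continuous y} {t : ℝ}
    (h : seg d r x hx t = seg d r y hy t) : EqOn x y (Icc (t - r) t) := by
  intro τ hτ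
  have := ContinuousMap.congr_fun h ⟨τ - t, by linarith [hτ.1], by linarith [hτ.2]⟩
  simpa only [seg, ContinuousMap.coe_mk, add_sub_cancel] using this

lemma norm_seg_le {x : ℝ → Rd d} (hx : Continuous x) {t M : ℝ} (hM : 0 ≤ M)
    (h : ∀ θ ∈ Icc (t - r) t, ‖x θ‖ ≤ M) : ‖seg d r x hx t‖ ≤ M :=
  (ContinuousMap.norm_le _ hM).2 fun θ => h _ ⟨by linarith [θ.2.1], by linarith [θ.2.2]⟩

lemma norm_le_norm_seg (hr : 0 ≤ r) {x : ℝ → Rd d} (hx : Continuous x) (t : ℝ) :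
    ‖x t‖ ≤ ‖seg d r x hx t‖ := by
  simpa [seg] using (seg d r x hx t).norm_coe_le_norm ⟨0, by linarith, le_rfl⟩

end Segments

lemma exists_bound_of_continuousOn_Ici {E : Type*} [NormedAddCommGroup E] {f : ℝ → E}
    {a u M : ℝ} (hf : ContinuousOn f (Ici a)) (h : ∀ τ, u ≤ τ → ‖f τ‖ ≤ M) :
    ∃ B, ∀ τ, a ≤ τ → ‖f τ‖ ≤ B := by
  obtain ⟨C, hC⟩ := (isCompact_Icc (a := a) (b := u)).exists_bound_of_continuousOn
    (hf.mono Icc_subset_Ici_self)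
  refine ⟨max C M, fun τ hτ => ?_⟩
  rcases le_total τ u with hτu | hτu
  · exact (hC τ ⟨hτ, hτu⟩).trans (le_max_left _ _)
  · exact (h τ hτu).trans (le_max_right _ _)

section Solutions

variable {d : ℕ} {r : ℝ} {L : ℝ → (Ph d r →L[ℝ] Rd d)} {s : ℝ}

lemma IsSol.sub {x y : ℝ → Rd d} {hx : Continuous x} {hy : Continuous y}
    (hxs : IsSol d r L s x hx) (hys : IsSol d r L s y hy) :
    IsSol d r L s (fun τ => x τ - y τ) (hx.sub hy) := by
  intro τ hτ
  rw [seg_sub hx hy, map_sub]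
  exact (hxs τ hτ).sub (hys τ hτ)

lemma IsSol.const_smul {x : ℝ → Rd d} {hx : Continuous x} (hxs : IsSol d r L s x hx) (c : ℝ) :
    IsSol d r L s (fun τ => c • x τ) (hx.const_smul c) := by
  intro τ hτ
  rw [seg_const_smul hx, map_smul]
  exact (hxs τ hτ).const_smul c

/-- Gronwall for `F σ = ∫ₛ^σ ‖u_τ‖`: with `K` bounding `‖L‖`, `u` and hence its segments are
bounded by `K F`, so `F' ≤ K F` and `F = 0`. -/
lemma IsSol.eq_zero_of_eqOn_zero (hr : 0 ≤ r) (hL : ContinuousOn L (Ici 0)) (hs : 0 ≤ s)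
    {u : ℝ → Rd d} {hu : Continuous u} (hus : IsSol d r L s u hu)
    (h0 : EqOn u 0 (Icc (s - r) s)) : ∀ τ, s - r ≤ τ → u τ = 0 := by
  suffices hseg : ∀ b, s ≤ b → ‖seg d r u hu b‖ ≤ 0 by
    intro τ hτ
    rcases le_total τ s with hτs | hτs
    · exact h0 ⟨hτ, hτs⟩
    · exact norm_le_zero_iff.1 ((norm_le_norm_seg hr hu τ).trans (hseg τ hτs))
  intro b hb
  obtain ⟨K, hK⟩ := (isCompact_Icc (a := s) (b := b)).exists_bound_of_continuousOn (f := L)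
    (hL.mono fun σ (hσ : σ ∈ Icc s b) => hs.trans hσ.1)
  have hK0 : 0 ≤ K := (norm_nonneg _).trans (hK s ⟨le_rfl, hb⟩)
  set v : ℝ → ℝ := fun σ => ‖seg d r u hu σ‖
  have hv : Continuous v := (continuous_seg u hu).norm
  set F : ℝ → ℝ := fun σ => ∫ τ in s..σ, v τ
  have hF : ∀ σ, HasDerivAt F (v σ) σ := fun σ => (hv.integral_hasStrictDerivAt s σ).hasDerivAt
  have hF_mono : Monotone F :=
    monotone_of_deriv_nonneg (fun σ => (hF σ).differentiableAt)
      fun σ => (hF σ).deriv ▸ norm_nonneg _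
  have hFs : F s = 0 := intervalIntegral.integral_same
  have hF_nonneg : ∀ σ, s ≤ σ → 0 ≤ F σ := fun σ hσ => hFs ▸ hF_mono hσ
  have hu_le : ∀ θ ∈ Icc s b, ‖u θ‖ ≤ K * F θ := by
    refine image_norm_le_of_norm_deriv_right_le_deriv_boundary hu.continuousOn
      (fun σ hσ => (hus σ hσ.1).mono (Ici_subset_Ici.2 hσ.1)) ?_
      (fun σ => (hF σ).const_mul K) fun σ hσ => ?_
    · simp [hFs, h0 ⟨by linarith, le_rfl⟩]
    · exact ((L σ).le_opNorm _).trans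
        (mul_le_mul_of_nonneg_right (hK σ (Ico_subset_Icc_self hσ)) (norm_nonneg _))
  have hv_le : ∀ σ ∈ Icc s b, v σ ≤ K * F σ := by
    intro σ hσ
    refine norm_seg_le hu (mul_nonneg hK0 (hF_nonneg σ hσ.1)) fun θ hθ => ?_
    rcases le_total θ s with hθs | hθs
    · simp [h0 ⟨by linarith [hθ.1, hσ.1], hθs⟩, mul_nonneg hK0 (hF_nonneg σ hσ.1)]
    · exact (hu_le θ ⟨hθs, hθ.2.trans hσ.2⟩).trans
        (mul_le_mul_of_nonneg_left (hF_mono hθ.2) hK0)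
  have hF_zero : ∀ σ ∈ Icc s b, F σ = 0 := by
    refine eq_zero_of_abs_deriv_le_mul_abs_self_of_eq_zero_right (K := K)
      (fun σ _ => (hF σ).continuousAt.continuousWithinAt) (fun σ _ => (hF σ).hasDerivWithinAt)
      hFs fun σ hσ => ?_
    rw [Real.norm_of_nonneg (norm_nonneg _), Real.norm_of_nonneg (hF_nonneg σ hσ.1)]
    exact hv_le σ (Ico_subset_Icc_self hσ)
  simpa only [hF_zero b ⟨hb, le_rfl⟩, mul_zero] using hv_le b ⟨hb, le_rfl⟩

lemma uniqueSol_of_continuousOn (hr : 0 ≤ r) (hL : ContinuousOn L (Ici 0)) :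
    UniqueSol d r L := by
  intro s hs x y hx hy hxs hys hxy τ hτ
  refine sub_eq_zero.1 ((hxs.sub hys).eq_zero_of_eqOn_zero hr hL hs (fun θ hθ => ?_) τ hτ)
  exact sub_eq_zero.2 (eqOn_of_seg_eq hxy hθ)

lemma IsSol.seg_eq_solOp {T : ℝ → ℝ → (Ph d r →L[ℝ] Ph d r)} (hT : IsSolOp d r L T)
    (hU : UniqueSol d r L) (hs : 0 ≤ s) {x : ℝ → Rd d} {hx : Continuous x}
    (hxs : IsSol d r L s x hx) : ∀ τ, s ≤ τ → seg d r x hx τ = T τ s (seg d r x hx s) := by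
  obtain ⟨w, hw, hws, hwx, hwT⟩ := hT s hs (seg d r x hx s)
  intro τ hτ
  rw [← hwT τ hτ]
  exact seg_eq_of_eqOn hx hw fun θ hθ =>
    hU s hs x w hx hw hxs hws hwx.symm θ (by linarith [hθ.1])

end Solutions

def IsPseudoSol (d : ℕ) (r : ℝ) (L : ℝ → (Ph d r →L[ℝ] Rd d)) (δ : ℝ) (y : ℝ → Rd d)
    (hy : Continuous y) : Prop :=
  ∃ yd : ℝ → Rd d, ContinuousOn yd (Ici 0) ∧
    (∀ t, 0 ≤ t → HasDerivWithinAt y (yd t) (Ici 0) t) ∧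
    ∀ t, 0 ≤ t → ‖yd t - L t (seg d r y hy t)‖ ≤ δ

section PseudoSolutions

variable {d : ℕ} {r : ℝ} {L : ℝ → (Ph d r →L[ℝ] Rd d)} {δ : ℝ} {y : ℝ → Rd d}
  {hy : Continuous y}

lemma IsPseudoSol.nonneg (hyp : IsPseudoSol d r L δ y hy) : 0 ≤ δ := by
  obtain ⟨yd, -, -, hdef⟩ := hyp
  exact (norm_nonneg _).trans (hdef 0 le_rfl)

lemma IsPseudoSol.mono (hyp : IsPseudoSol d r L δ y hy) {δ' : ℝ} (hδ : δ ≤ δ') :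
    IsPseudoSol d r L δ' y hy := by
  obtain ⟨yd, hyd, hyd', hdef⟩ := hyp
  exact ⟨yd, hyd, hyd', fun t ht => (hdef t ht).trans hδ⟩

lemma IsPseudoSol.const_smul (hyp : IsPseudoSol d r L δ y hy) {c : ℝ} (hc : 0 ≤ c) :
    IsPseudoSol d r L (c * δ) (fun τ => c • y τ) (hy.const_smul c) := by
  obtain ⟨yd, hyd, hyd', hdef⟩ := hyp
  refine ⟨fun t => c • yd t, hyd.const_smul c, fun t ht => (hyd' t ht).const_smul c,
    fun t ht => ?_⟩
  rw [seg_const_smul hy, map_smul, ← smul_sub, norm_smul, Real.norm_of_nonneg hc]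
  exact mul_le_mul_of_nonneg_left (hdef t ht) hc

/-- Shadowing is linear: rescaling a pseudosolution with any defect into one with defect below
the `δ` of `ε = 1` gives a true solution at bounded distance. -/
lemma Shadowable.exists_isSol_norm_seg_sub_le (hsh : Shadowable d r L)
    (hyp : IsPseudoSol d r L δ y hy) :
    ∃ (x : ℝ → Rd d) (hx : Continuous x) (M : ℝ), IsSol d r L 0 x hx ∧
      ∀ t, 0 ≤ t → ‖seg d r x hx t - seg d r y hy t‖ ≤ M := by
  obtain ⟨δ₁, hδ₁, hshad⟩ := hsh 1 one_pos
  have hδ := hyp.nonneg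
  set c := δ₁ / (δ + 1)
  have hc : 0 < c := by positivity
  have hcδ : c * δ ≤ δ₁ := by
    rw [div_mul_eq_mul_div, div_le_iff₀ (by positivity)]
    nlinarith
  obtain ⟨yd, hyd, hyd', hdef⟩ := (hyp.const_smul hc.le).mono hcδ
  obtain ⟨X, hX, hXs, hXy⟩ := hshad _ yd _ hyd hyd' hdef
  refine ⟨fun τ => c⁻¹ • X τ, hX.const_smul c⁻¹, c⁻¹, hXs.const_smul c⁻¹, fun t ht => ?_⟩
  have hscale : seg d r (fun τ => c⁻¹ • X τ) (hX.const_smul c⁻¹) t - seg d r y hy t =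
      c⁻¹ • (seg d r X hX t - seg d r (fun τ => c • y τ) (hy.const_smul c) t) := by
    rw [seg_const_smul, seg_const_smul, smul_sub, smul_smul, inv_mul_cancel₀ hc.ne', one_smul]
  rw [hscale, norm_smul, Real.norm_of_nonneg (inv_nonneg.2 hc.le)]
  exact mul_le_of_le_one_right (inv_nonneg.2 hc.le) (hXy t ht)

end PseudoSolutions

lemma deriv_smoothTransition_of_notMem_Icc {x : ℝ} (hx : x ∉ Icc 0 1) :
    deriv Real.smoothTransition x = 0 := by
  rcases not_and_or.1 hx with hx | hx
  · have hev : Real.smoothTransition =ᶠ[nhds x] fun _ => 0 :=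
      Filter.eventuallyEq_of_mem (Iio_mem_nhds (not_le.1 hx))
        fun ζ hζ => Real.smoothTransition.zero_of_nonpos (le_of_lt hζ)
    rw [hev.deriv_eq, deriv_const]
  · have hev : Real.smoothTransition =ᶠ[nhds x] fun _ => 1 :=
      Filter.eventuallyEq_of_mem (Ioi_mem_nhds (not_le.1 hx))
        fun ζ hζ => Real.smoothTransition.one_of_one_le (le_of_lt hζ)
    rw [hev.deriv_eq, deriv_const]

/-- Multiplying by a smooth cutoff that switches on over `[t + 1, t + 2]` turns a solution on
`[t, ∞)` into a pseudosolution on `[0, ∞)`: its defect is continuous and vanishes eventually. -/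
lemma IsSol.exists_isPseudoSol_eventually_eq {d : ℕ} {r : ℝ} {L : ℝ → (Ph d r →L[ℝ] Rd d)}
    (hL : ContinuousOn L (Ici 0)) {t : ℝ} {z : ℝ → Rd d} {hz : Continuous z}
    (hzs : IsSol d r L t z hz) :
    ∃ (y : ℝ → Rd d) (hy : Continuous y) (δ u : ℝ), IsPseudoSol d r L δ y hy ∧
      ∀ τ, u ≤ τ → seg d r y hy τ = seg d r z hz τ := by
  set a := t + 1
  set η : ℝ → ℝ := fun τ => Real.smoothTransition (τ - a)
  set η' : ℝ → ℝ := fun τ => deriv Real.smoothTransition (τ - a)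
  have hηc : Continuous η := Real.smoothTransition.continuous.comp (continuous_sub_right a)
  have hη'c : Continuous η' :=
    ((Real.smoothTransition.contDiff (n := 1)).continuous_deriv le_rfl).comp
      (continuous_sub_right a)
  have hη : ∀ τ, HasDerivAt η (η' τ) τ := fun τ =>
    ((Real.smoothTransition.contDiff (n := 1)).differentiable one_ne_zero _).hasDerivAt
      |>.comp_sub_const τ a
  set y : ℝ → Rd d := fun τ => η τ • z τ
  have hy : Continuous y := hηc.smul hz
  set yd : ℝ → Rd d := fun τ => η' τ • z τ + η τ • L τ (seg d r z hz τ)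
  have hyd : ContinuousOn yd (Ici 0) :=
    (hη'c.smul hz).continuousOn.add
      (hηc.continuousOn.smul (hL.clm_apply (continuous_seg z hz).continuousOn))
  have hyd' : ∀ τ, HasDerivAt y (yd τ) τ := by
    intro τ
    rcases lt_or_ge τ a with hτ | hτ
    · have hev : y =ᶠ[nhds τ] fun _ => 0 :=
        Filter.eventuallyEq_of_mem (Iio_mem_nhds hτ) fun ζ hζ => by
          simp [y, η, Real.smoothTransition.zero_of_nonpos (sub_nonpos.2 (le_of_lt hζ))]
      have hyd0 : yd τ = 0 := by
        simp [yd, η, η', Real.smoothTransition.zero_of_nonpos (sub_nonpos.2 hτ.le),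
          deriv_smoothTransition_of_notMem_Icc fun h => not_le.2 (sub_neg.2 hτ) h.1]
      exact hyd0 ▸ (hasDerivAt_const τ 0).congr_of_eventuallyEq hev
    · have hz' : HasDerivAt z (L τ (seg d r z hz τ)) τ :=
        (hzs τ (by linarith)).hasDerivAt (Ici_mem_nhds (by linarith))
      exact ((hη τ).smul hz').congr_deriv (add_comm _ _)
  have hyz : ∀ τ, a + 1 + r ≤ τ → seg d r y hy τ = seg d r z hz τ := fun τ hτ =>
    seg_eq_of_eqOn hy hz fun θ hθ => by
      simp [y, η, Real.smoothTransition.one_of_one_le (show 1 ≤ θ - a by linarith [hθ.1])]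
  have hdef_far : ∀ τ, a + 2 + |r| ≤ τ → ‖yd τ - L τ (seg d r y hy τ)‖ ≤ 0 := by
    intro τ hτ
    simp [yd, η, η', hyz τ (by linarith [le_abs_self r]), Real.smoothTransition.one_of_one_le
      (show 1 ≤ τ - a by linarith [abs_nonneg r]), deriv_smoothTransition_of_notMem_Icc
      fun h => not_le.2 (show 1 < τ - a by linarith [abs_nonneg r]) h.2]
  obtain ⟨δ, hδ⟩ := exists_bound_of_continuousOn_Ici
    (hyd.sub (hL.clm_apply (continuous_seg y hy).continuousOn)) hdef_far
  exact ⟨y, hy, δ, a + 1 + r, ⟨yd, hyd, fun τ _ => (hyd' τ).hasDerivWithinAt, hδ⟩, hyz⟩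

/-- If Eq. x'(t) = L(t)x_t is shadowable, then C = T(t,s)C + 𝒮(t) for all
t ≥ s ≥ 0. -/
theorem stmt4 (d : ℕ) (r : ℝ) (hr : 0 ≤ r)
    (L : ℝ → (Ph d r →L[ℝ] Rd d)) (hL : ContinuousOn L (Set.Ici 0))
    (T : ℝ → ℝ → (Ph d r →L[ℝ] Ph d r))
    (hT : IsSolOp d r L T) (hcoc : Cocycle d r T)
    (hsh : Shadowable d r L) :
    ∀ t s, 0 ≤ s → s ≤ t → ∀ φ : Ph d r,
      ∃ φ₁ φ₂ : Ph d r, φ₂ ∈ stableSub d r T t ∧ φ = T t s φ₁ + φ₂ := by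
  intro t s hs hst φ
  have ht : 0 ≤ t := hs.trans hst
  obtain ⟨z, hz, hzs, -, hzT⟩ := hT t ht φ
  obtain ⟨y, hy, δ, u, hyp, hyz⟩ := hzs.exists_isPseudoSol_eventually_eq hL
  obtain ⟨x, hx, M, hxs, hxy⟩ := hsh.exists_isSol_norm_seg_sub_le hyp
  have hxT := hxs.seg_eq_solOp hT (uniqueSol_of_continuousOn hr hL) le_rfl
  set φ₁ := T s 0 (seg d r x hx 0)
  refine ⟨φ₁, φ - T t s φ₁, ?_, by abel⟩
  have horbit : ∀ τ, t ≤ τ → T τ t (φ - T t s φ₁) = seg d r z hz τ - seg d r x hx τ := by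
    intro τ hτ
    rw [map_sub, ← hzT τ hτ, hxT τ (ht.trans hτ), hcoc.2 τ s 0 le_rfl hs (hst.trans hτ),
      hcoc.2 τ t s hs hst hτ]
    rfl
  obtain ⟨B, hB⟩ := exists_bound_of_continuousOn_Ici (a := t) (u := max u t)
    (f := fun τ => seg d r z hz τ - seg d r x hx τ)
    ((continuous_seg z hz).sub (continuous_seg x hx)).continuousOn fun τ hτ => by
      rw [← hyz τ (le_of_max_le_left hτ), norm_sub_rev]
      exact hxy τ (ht.trans (le_of_max_le_right hτ))
  exact ⟨B, fun τ hτ => horbit τ hτ ▸ hB τ hτ⟩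

end
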